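/- arXiv:2203.00576 — 2 statements merged into one kernel-verified Lean document; each statement's English description precedes it below -/
import Mathlib

section
/- Let β_1, …, β_m ∈ Γ, let t_1, …, t_m be distinct positive integers, and let Λ be a nonempty linearly ordered set with no greatest element together with a strictly increasing map γ : Λ → Γ. Then there exist b ∈ {1, …, m} and ρ ∈ Λ such that for every σ ∈ Λ with σ > ρ and every i ∈ {1, …, m} with i ≠ b, one has β_i + t_i·γ(σ) > β_b + t_b·γ(σ). -/
/-! Along `γ`, the maps `σ ↦ β i + t i • γ σ` are pairwise eventually strictly comparable:
once `s < t`, comparing `a + s • g` with `b + t • g` amounts to comparing `a` with the strictly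
increasing `b + (t - s) • g`, which either eventually exceeds `a` or stays below it forever.
Pick `σ` beyond all these finitely many thresholds and let `b` minimise the values at `σ`;
for `i ≠ b` the eventual comparison of `b` and `i` cannot favour `i`, as it already holds
at `σ`. -/

open Filter

theorem StrictMono.eventually_gt_or_eventually_lt {Λ Γ : Type*} [PartialOrder Λ] [NoMaxOrder Λ]
    [LinearOrder Γ] {f : Λ → Γ} (hf : StrictMono f) (c : Γ) :
    (∀ᶠ σ in atTop, c < f σ) ∨ ∀ᶠ σ in atTop, f σ < c := by
  by_cases hex : ∃ ρ, c < f ρ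
  · obtain ⟨ρ, hρ⟩ := hex
    exact Or.inl <| (eventually_ge_atTop ρ).mono fun σ hσ => hρ.trans_le (hf.monotone hσ)
  · simp only [not_exists, not_lt] at hex
    refine Or.inr <| Eventually.of_forall fun σ => ?_
    obtain ⟨σ', hσ'⟩ := exists_gt σ
    exact (hf hσ').trans_le (hex σ')

theorem StrictMono.eventually_add_nsmul_lt_or_gt {Λ Γ : Type*} [PartialOrder Λ] [NoMaxOrder Λ]
    [AddCommMonoid Γ] [LinearOrder Γ] [IsOrderedCancelAddMonoid Γ] {γ : Λ → Γ}
    (hγ : StrictMono γ) {s t : ℕ} (hst : s ≠ t) (a b : Γ) :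
    (∀ᶠ σ in atTop, a + s • γ σ < b + t • γ σ) ∨ ∀ᶠ σ in atTop, b + t • γ σ < a + s • γ σ := by
  wlog hlt : s < t generalizing s t a b
  · exact (this hst.symm b a (hst.lt_or_gt.resolve_left hlt)).symm
  obtain ⟨n, rfl⟩ := Nat.exists_eq_add_of_lt hlt
  have hshift : ∀ g : Γ, b + (s + n + 1) • g = b + (n + 1) • g + s • g := fun g => by
    rw [add_assoc s, add_nsmul]
    abel
  rcases ((hγ.const_nsmul n.succ_ne_zero).const_add b).eventually_gt_or_eventually_lt a with h | h
  · exact Or.inl <| h.mono fun σ hσ => by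
      rw [hshift]
      exact add_lt_add_left hσ _
  · exact Or.inr <| h.mono fun σ hσ => by
      rw [hshift]
      exact add_lt_add_left hσ _

theorem Filter.exists_eventually_forall_ne_lt {α ι Γ : Type*} {l : Filter α} [l.NeBot]
    [Finite ι] [Nonempty ι] [LinearOrder Γ] (A : ι → α → Γ)
    (hA : ∀ i j, i ≠ j → (∀ᶠ x in l, A i x < A j x) ∨ ∀ᶠ x in l, A j x < A i x) :
    ∃ b, ∀ᶠ x in l, ∀ i, i ≠ b → A b x < A i x := by
  have hall : ∀ᶠ x in l, ∀ i j, (∀ᶠ y in l, A i y < A j y) → A i x < A j x :=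
    eventually_all.2 fun i => eventually_all.2 fun j => eventually_imp_distrib_left.2 id
  obtain ⟨x, hx⟩ := hall.exists
  obtain ⟨b, hb⟩ := Finite.exists_min (A · x)
  refine ⟨b, eventually_all.2 fun i => eventually_imp_distrib_left.2 fun hib => ?_⟩
  refine (hA b i hib.symm).resolve_right fun hib' => ?_
  exact (hx i b hib').not_ge (hb i)

theorem stmt_0_general {Γ : Type*} [AddCommGroup Γ] [LinearOrder Γ] [IsOrderedAddMonoid Γ]
    {Λ : Type*} [LinearOrder Λ] [Nonempty Λ]
    (hΛ : ∀ a : Λ, ∃ b : Λ, a < b)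
    {m : ℕ} (hm : 0 < m) (β : Fin m → Γ) (t : Fin m → ℕ)
    (htinj : Function.Injective t)
    (γ : Λ → Γ) (hγ : StrictMono γ) :
    ∃ b : Fin m, ∃ ρ : Λ, ∀ σ : Λ, ρ < σ → ∀ i : Fin m, i ≠ b →
      β b + t b • γ σ < β i + t i • γ σ := by
  have : NoMaxOrder Λ := ⟨hΛ⟩
  have : Nonempty (Fin m) := ⟨⟨0, hm⟩⟩
  obtain ⟨b, hb⟩ := exists_eventually_forall_ne_lt (l := atTop)
    (fun i σ => β i + t i • γ σ)
    fun i j hij => hγ.eventually_add_nsmul_lt_or_gt (htinj.ne hij) (β i) (β j)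
  obtain ⟨ρ, hρ⟩ := eventually_atTop.1 hb
  exact ⟨b, ρ, fun σ hσ => hρ σ hσ.le⟩

/-- Kaplansky's Lemma 4: given `β₁, …, β_m` in a linearly ordered abelian group `Γ`,
distinct positive integers `t₁, …, t_m`, and a strictly increasing `γ : Λ → Γ` from a
nonempty linear order `Λ` with no greatest element, there are `b` and `ρ` such that for all
`σ > ρ` and all `i ≠ b`, `β_i + t_i·γ(σ) > β_b + t_b·γ(σ)`. -/
theorem stmt_0 {Γ : Type*} [AddCommGroup Γ] [LinearOrder Γ] [IsOrderedAddMonoid Γ]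
    {Λ : Type*} [LinearOrder Λ] [Nonempty Λ]
    (hΛ : ∀ a : Λ, ∃ b : Λ, a < b)
    {m : ℕ} (hm : 0 < m) (β : Fin m → Γ) (t : Fin m → ℕ)
    (ht : ∀ i, 0 < t i) (htinj : Function.Injective t)
    (γ : Λ → Γ) (hγ : StrictMono γ) :
    ∃ b : Fin m, ∃ ρ : Λ, ∀ σ : Λ, ρ < σ → ∀ i : Fin m, i ≠ b →
      β b + t b • γ σ < β i + t i • γ σ :=
  stmt_0_general hΛ hm β t htinj γ hγ
end

section
/- Let Q be a key polynomial for ν of degree n, and let f, q, r ∈ K[x] with f = qQ + r, q ≠ 0, and f nonconstant. Suppose γ ∈ ℝ satisfies ε(f) ≤ γ, γ < ε(Q), and moreover ε(r) ≤ γ in case r is nonconstant. Then ν(f) = ν(r) and ν_Q(qQ) − (ε(Q) − γ) ≥ ν(f). -/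
open Polynomial

noncomputable section

/-- A rank-one valuation on `K[x]`, modeled as a map to `ℝ ∪ {∞}`. -/
structure PolyVal (K : Type*) [Field K] where
  ν : Polynomial K → WithTop ℝ
  ν_eq_top_iff : ∀ f : Polynomial K, ν f = ⊤ ↔ f = 0
  ν_mul : ∀ f g : Polynomial K, ν (f * g) = ν f + ν g
  ν_add : ∀ f g : Polynomial K, min (ν f) (ν g) ≤ ν (f + g)

namespace PolyVal

variable {K : Type*} [Field K]

/-- The real value of `ν f`, with junk value `0` when `f = 0`. -/
def vr (v : PolyVal K) (f : Polynomial K) : ℝ := WithTop.untopD 0 (v.ν f)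

/-- `ε(f) = max{(ν(f) − ν(∂_b f))/b : 1 ≤ b ≤ deg f, ∂_b f ≠ 0}` (for nonconstant `f`). -/
def eps (v : PolyVal K) (f : Polynomial K) : ℝ :=
  sSup {x : ℝ | ∃ b : ℕ, 1 ≤ b ∧ b ≤ f.natDegree ∧ hasseDeriv b f ≠ 0 ∧
    x = (v.vr f - v.vr (hasseDeriv b f)) / b}

/-- A key polynomial for `ν`: a monic polynomial `Q` such that every (nonconstant)
`f` with `ε(f) ≥ ε(Q)` satisfies `deg f ≥ deg Q`. -/
def IsKeyPol (v : PolyVal K) (Q : Polynomial K) : Prop :=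
  Q.Monic ∧ 0 < Q.natDegree ∧
    ∀ f : Polynomial K, 0 < f.natDegree → v.eps Q ≤ v.eps f → Q.natDegree ≤ f.natDegree

/-- `Ψ_n`: the set of key polynomials for `ν` of degree `n`. -/
def Psi (v : PolyVal K) (n : ℕ) : Set (Polynomial K) :=
  {Q | v.IsKeyPol Q ∧ Q.natDegree = n}

end PolyVal

variable {K : Type*} [Field K]

/-- The `i`-th coefficient of the `Q`-expansion of `f` (for monic `Q`). -/
def qCoeff (Q f : Polynomial K) (i : ℕ) : Polynomial K := (f /ₘ Q ^ i) %ₘ Q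

namespace PolyVal

/-- The truncation `ν_Q(f) = min_{0 ≤ i ≤ r} ν(a_i Q^i)` along the `Q`-expansion of `f`. -/
def nuQ (v : PolyVal K) (Q f : Polynomial K) : WithTop ℝ :=
  (Finset.range (f.natDegree / Q.natDegree + 1)).inf fun i => v.ν (qCoeff Q f i * Q ^ i)

/-- The real value of `ν_Q(f)`, with junk value `0` when `ν_Q(f) = ∞`. -/
def nuQr (v : PolyVal K) (Q f : Polynomial K) : ℝ := WithTop.untopD 0 (v.nuQ Q f)

/-- `f` is `Ψ_n`-stable: `ν_{Q'}(f) = ν(f)` for some `Q' ∈ Ψ_n`. -/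
def Stable (v : PolyVal K) (n : ℕ) (f : Polynomial K) : Prop :=
  ∃ Q' ∈ v.Psi n, v.nuQ Q' f = v.ν f

/-- A limit key polynomial for `Ψ_n`: a monic non-stable polynomial of minimal degree
among non-stable polynomials. -/
def IsLimitKeyPol (v : PolyVal K) (n : ℕ) (F : Polynomial K) : Prop :=
  F.Monic ∧ ¬ v.Stable n F ∧ ∀ g : Polynomial K, ¬ v.Stable n g → F.natDegree ≤ g.natDegree

end PolyVal

/-!
Write `ε = ε(Q)` and `δ = ε(Q) - γ`. Call `m` the last index at which the slope
`(ν Q - ν ∂_m Q) / m` equals `ε`. Every nonzero `Q`-coefficient `a_i` has degree `< deg Q`, so its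
slopes are `< ε`; by the Leibniz rule for Hasse derivatives, `a_i Q^i` then has slopes `≤ ε`,
with `i m` the last one equal to `ε`. Let `i₀` be the last index with `ν(a_{i₀} Q^{i₀}) = ν_Q(qQ)`;
then in `∂_{i₀ m}(qQ) = Σ ∂_{i₀ m}(a_i Q^i)` the term `i = i₀` has strictly smallest value, so
`ν(∂_b(qQ)) = ν_Q(qQ) - b ε` with `b = i₀ m ≥ 1` (`i₀ ≥ 1` because `Q ∣ qQ`). On the other hand
`ε(f), ε(r) ≤ γ` give `min(ν f, ν r) ≤ ν(∂_b(f - r)) + b γ = ν_Q(qQ) - b δ < ν(qQ)`,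
and the ultrametric inequality for `f - r = qQ` forces `ν f = ν r ≤ ν_Q(qQ) - δ`.
-/

namespace AddValuation

variable {R Γ₀ : Type*} [Ring R] [LinearOrderedAddCommMonoidWithTop Γ₀] (v : AddValuation R Γ₀)

theorem map_sum_eq_of_lt {ι : Type*} [DecidableEq ι] {s : Finset ι} {f : ι → R} {j : ι}
    (hj : j ∈ s) (hfj : v (f j) ≠ ⊤) (hf : ∀ i ∈ s \ {j}, v (f j) < v (f i)) :
    v (∑ i ∈ s, f i) = v (f j) := by
  rw [Finset.sum_eq_add_sum_sdiff_singleton_of_mem hj]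
  exact map_add_eq_of_lt_left v (map_lt_sum v hfj hf)

theorem map_eq_of_min_lt_map_sub {x y : R} (h : min (v x) (v y) < v (x - y)) : v x = v y := by
  by_contra hne
  rcases lt_or_gt_of_ne hne with hlt | hlt
  · rw [map_sub_eq_of_lt_left v hlt, min_eq_left hlt.le] at h
    exact lt_irrefl _ h
  · rw [map_sub_eq_of_lt_right v hlt, min_eq_right hlt.le] at h
    exact lt_irrefl _ h

end AddValuation

theorem Finset.exists_last_mem_eq_inf {ι α : Type*} [LinearOrder ι] [LinearOrder α] [OrderTop α]
    {s : Finset ι} (hs : s.Nonempty) (f : ι → α) :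
    ∃ i ∈ s, f i = s.inf f ∧ ∀ j ∈ s, i < j → s.inf f < f j := by
  obtain ⟨i, hi, hfi⟩ := s.exists_mem_eq_inf hs f
  obtain ⟨i₀, hi₀, hlast⟩ := (s.filter fun i => f i = s.inf f).exists_max_image id
    ⟨i, Finset.mem_filter.2 ⟨hi, hfi.symm⟩⟩
  obtain ⟨hi₀s, hfi₀⟩ := Finset.mem_filter.1 hi₀
  refine ⟨i₀, hi₀s, hfi₀, fun j hj hij => (Finset.inf_le hj).lt_of_ne fun hfj => ?_⟩
  exact (hlast j (Finset.mem_filter.2 ⟨hj, hfj.symm⟩)).not_gt hij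

section QExpansion

variable {Q : K[X]}

theorem divByMonic_pow_succ (hQ : Q.Monic) (f : K[X]) (N : ℕ) :
    f /ₘ Q ^ (N + 1) = f /ₘ Q ^ N /ₘ Q := by
  set p := f /ₘ Q ^ N
  refine (div_modByMonic_unique (p /ₘ Q) (f %ₘ Q ^ N + Q ^ N * (p %ₘ Q)) (hQ.pow _) ⟨?_, ?_⟩).1
  · linear_combination modByMonic_add_div f (Q ^ N) + Q ^ N * modByMonic_add_div p Q
  · have hQN : (Q ^ N).degree ≠ ⊥ := degree_ne_bot.2 (hQ.pow N).ne_zero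
    rw [pow_succ, degree_mul]
    refine (degree_add_le _ _).trans_lt (max_lt ?_ ?_)
    · refine (degree_modByMonic_lt f (hQ.pow N)).trans_le ?_
      simpa using le_add_of_nonneg_right (zero_le_degree_iff.2 hQ.ne_zero)
    · rw [degree_mul]
      exact WithBot.add_lt_add_left hQN (degree_modByMonic_lt p hQ)

theorem sum_qCoeff_mul_pow_add (hQ : Q.Monic) (f : K[X]) (N : ℕ) :
    ∑ i ∈ Finset.range N, qCoeff Q f i * Q ^ i + f /ₘ Q ^ N * Q ^ N = f := by
  induction N with
  | zero => simp
  | succ N ih =>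
    rw [Finset.sum_range_succ, divByMonic_pow_succ hQ, qCoeff]
    linear_combination ih + Q ^ N * modByMonic_add_div (f /ₘ Q ^ N) Q

theorem sum_qCoeff_mul_pow (hQ : Q.Monic) (hQd : 0 < Q.natDegree) (f : K[X]) :
    ∑ i ∈ Finset.range (f.natDegree / Q.natDegree + 1), qCoeff Q f i * Q ^ i = f := by
  have hlt : f.degree < (Q ^ (f.natDegree / Q.natDegree + 1)).degree := by
    rcases eq_or_ne f 0 with rfl | hf
    · exact degree_zero (R := K) ▸ bot_lt_iff_ne_bot.2 (degree_ne_bot.2 (hQ.pow _).ne_zero)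
    refine degree_lt_degree ?_
    rw [hQ.natDegree_pow, mul_comm]
    exact Nat.lt_mul_div_succ _ hQd
  have h := sum_qCoeff_mul_pow_add hQ f (f.natDegree / Q.natDegree + 1)
  rwa [(divByMonic_eq_zero_iff (hQ.pow _)).2 hlt, zero_mul, add_zero] at h

theorem degree_qCoeff_lt (hQ : Q.Monic) (f : K[X]) (i : ℕ) : (qCoeff Q f i).degree < Q.degree :=
  degree_modByMonic_lt _ hQ

theorem qCoeff_zero_of_dvd (hQ : Q.Monic) {f : K[X]} (h : Q ∣ f) : qCoeff Q f 0 = 0 := by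
  simpa [qCoeff] using (modByMonic_eq_zero_iff_dvd hQ).2 h

end QExpansion

namespace PolyVal

variable (v : PolyVal K)

@[simp]
theorem nu_zero : v.ν 0 = ⊤ := (v.ν_eq_top_iff 0).2 rfl

theorem nu_eq_coe_vr {f : K[X]} (hf : f ≠ 0) : v.ν f = (v.vr f : WithTop ℝ) := by
  have h : v.ν f ≠ ⊤ := mt (v.ν_eq_top_iff f).1 hf
  lift v.ν f to ℝ using h with x hx
  simp [vr, ← hx]

theorem nu_one : v.ν 1 = 0 := by
  have h := v.ν_mul 1 1
  rw [mul_one, v.nu_eq_coe_vr one_ne_zero, ← WithTop.coe_add, WithTop.coe_inj] at h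
  rw [v.nu_eq_coe_vr one_ne_zero, WithTop.coe_eq_zero]
  linarith

def toAddValuation : AddValuation K[X] (WithTop ℝ) :=
  AddValuation.of v.ν v.nu_zero v.nu_one v.ν_add v.ν_mul

@[simp]
theorem toAddValuation_apply (f : K[X]) : v.toAddValuation f = v.ν f := rfl

theorem vr_mul {f g : K[X]} (hf : f ≠ 0) (hg : g ≠ 0) : v.vr (f * g) = v.vr f + v.vr g := by
  have h := v.ν_mul f g
  rwa [v.nu_eq_coe_vr hf, v.nu_eq_coe_vr hg, v.nu_eq_coe_vr (mul_ne_zero hf hg),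
    ← WithTop.coe_add, WithTop.coe_inj] at h

theorem coe_le_nu {f : K[X]} {x : ℝ} (h : f ≠ 0 → x ≤ v.vr f) : (x : WithTop ℝ) ≤ v.ν f := by
  rcases eq_or_ne f 0 with rfl | hf
  · simp
  · rw [v.nu_eq_coe_vr hf]
    exact WithTop.coe_le_coe.2 (h hf)

theorem coe_lt_nu {f : K[X]} {x : ℝ} (h : f ≠ 0 → x < v.vr f) : (x : WithTop ℝ) < v.ν f := by
  rcases eq_or_ne f 0 with rfl | hf
  · simp
  · rw [v.nu_eq_coe_vr hf]
    exact WithTop.coe_lt_coe.2 (h hf)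

theorem nu_le_nu_iff {f g : K[X]} (hf : f ≠ 0) (hg : g ≠ 0) :
    v.ν f ≤ v.ν g ↔ v.vr f ≤ v.vr g := by
  rw [v.nu_eq_coe_vr hf, v.nu_eq_coe_vr hg, WithTop.coe_le_coe]

def slopes (h : K[X]) : Set ℝ :=
  {x : ℝ | ∃ b : ℕ, 1 ≤ b ∧ b ≤ h.natDegree ∧ hasseDeriv b h ≠ 0 ∧
    x = (v.vr h - v.vr (hasseDeriv b h)) / b}

theorem eps_eq_sSup_slopes (h : K[X]) : v.eps h = sSup (v.slopes h) := rfl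

theorem finite_slopes (h : K[X]) : (v.slopes h).Finite :=
  ((Finset.range (h.natDegree + 1)).finite_toSet.image
    fun b : ℕ => (v.vr h - v.vr (hasseDeriv b h)) / b).subset <| by
    rintro _ ⟨b, -, hb, -, rfl⟩
    exact ⟨b, by simpa [Nat.lt_succ_iff] using hb, rfl⟩

theorem le_natDegree_of_hasseDeriv_ne_zero {h : K[X]} {b : ℕ} (hb : hasseDeriv b h ≠ 0) :
    b ≤ h.natDegree :=
  not_lt.1 fun hlt => hb (hasseDeriv_eq_zero_of_lt_natDegree h b hlt)

theorem vr_sub_mul_eps_le {h : K[X]} {b : ℕ} (hb : 1 ≤ b) (hbh : hasseDeriv b h ≠ 0) :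
    v.vr h - b * v.eps h ≤ v.vr (hasseDeriv b h) := by
  have hmem : (v.vr h - v.vr (hasseDeriv b h)) / b ∈ v.slopes h :=
    ⟨b, hb, le_natDegree_of_hasseDeriv_ne_zero hbh, hbh, rfl⟩
  have hle := le_csSup (v.finite_slopes h).bddAbove hmem
  rw [← eps_eq_sSup_slopes, div_le_iff₀ (by exact_mod_cast hb)] at hle
  linarith

theorem nu_le_nu_hasseDeriv_add {h : K[X]} {γ : ℝ} (hγ : 0 < h.natDegree → v.eps h ≤ γ)
    {b : ℕ} (hb : 1 ≤ b) : v.ν h ≤ v.ν (hasseDeriv b h) + (b * γ : ℝ) := by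
  by_cases hbh : hasseDeriv b h = 0
  · simp [hbh]
  have hdeg := le_natDegree_of_hasseDeriv_ne_zero hbh
  have hh : h ≠ 0 := fun h0 => hbh (by simp [h0])
  have := v.vr_sub_mul_eps_le hb hbh
  have := mul_le_mul_of_nonneg_left (hγ (by omega)) (Nat.cast_nonneg b : (0 : ℝ) ≤ b)
  rw [v.nu_eq_coe_vr hh, v.nu_eq_coe_vr hbh, ← WithTop.coe_add, WithTop.coe_le_coe]
  linarith

theorem min_nu_le_nu_hasseDeriv_sub_add {f r : K[X]} {γ : ℝ}
    (hf : 0 < f.natDegree → v.eps f ≤ γ) (hr : 0 < r.natDegree → v.eps r ≤ γ) {b : ℕ}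
    (hb : 1 ≤ b) : min (v.ν f) (v.ν r) ≤ v.ν (hasseDeriv b (f - r)) + (b * γ : ℝ) := calc
  min (v.ν f) (v.ν r)
    ≤ min (v.ν (hasseDeriv b f)) (v.ν (hasseDeriv b r)) + (b * γ : ℝ) := by
      rw [← min_add_add_right]
      exact min_le_min (v.nu_le_nu_hasseDeriv_add hf hb) (v.nu_le_nu_hasseDeriv_add hr hb)
  _ ≤ v.ν (hasseDeriv b (f - r)) + (b * γ : ℝ) := by
      rw [map_sub, ← v.toAddValuation_apply]
      exact add_le_add (v.toAddValuation.map_sub _ _) le_rfl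

/-- The slopes `(ν h - ν ∂_b h) / b` are all `≤ ε`, and `m` is the largest `b` at which the slope
equals `ε` (`m = 0` when all slopes are `< ε`). -/
structure IsLastSlope (ε : ℝ) (h : K[X]) (m : ℕ) : Prop where
  ne_zero : h ≠ 0
  le : ∀ b : ℕ, ((v.vr h - b * ε : ℝ) : WithTop ℝ) ≤ v.ν (hasseDeriv b h)
  eq : v.ν (hasseDeriv m h) = ((v.vr h - m * ε : ℝ) : WithTop ℝ)
  lt : ∀ b : ℕ, m < b → ((v.vr h - b * ε : ℝ) : WithTop ℝ) < v.ν (hasseDeriv b h)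

variable {v}

theorem isLastSlope_zero {a : K[X]} (ha : a ≠ 0) {ε : ℝ} (hε : 0 < a.natDegree → v.eps a < ε) :
    v.IsLastSlope ε a 0 := by
  have hlt : ∀ b : ℕ, 0 < b → ((v.vr a - b * ε : ℝ) : WithTop ℝ) < v.ν (hasseDeriv b a) := by
    refine fun b hb => v.coe_lt_nu fun hba => ?_
    have := v.vr_sub_mul_eps_le hb hba
    have := mul_lt_mul_of_pos_left (hε (hb.trans_le (le_natDegree_of_hasseDeriv_ne_zero hba)))
      (Nat.cast_pos.2 hb : (0 : ℝ) < b)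
    linarith
  refine ⟨ha, fun b => ?_, by simp [v.nu_eq_coe_vr ha], hlt⟩
  rcases Nat.eq_zero_or_pos b with rfl | hb
  · simp [v.nu_eq_coe_vr ha]
  · exact (hlt b hb).le

theorem exists_isLastSlope_eps {Q : K[X]} (hQ : 0 < Q.natDegree) :
    ∃ m, 0 < m ∧ v.IsLastSlope (v.eps Q) Q m := by
  classical
  have hQ0 : Q ≠ 0 := ne_zero_of_natDegree_gt hQ
  have hne : (v.slopes Q).Nonempty := by
    refine ⟨_, Q.natDegree, hQ, le_rfl, ?_, rfl⟩
    simpa [hasseDeriv_natDegree_eq_C] using hQ0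
  obtain ⟨m₀, hm₀1, hm₀d, hm₀Q, hm₀⟩ := hne.csSup_mem (v.finite_slopes Q)
  let S := (Finset.Icc 1 Q.natDegree).filter fun b =>
    hasseDeriv b Q ≠ 0 ∧ (v.vr Q - v.vr (hasseDeriv b Q)) / b = v.eps Q
  obtain ⟨m, hmS, hlast⟩ := S.exists_max_image id
    ⟨m₀, Finset.mem_filter.2 ⟨Finset.mem_Icc.2 ⟨hm₀1, hm₀d⟩, hm₀Q, hm₀.symm⟩⟩
  obtain ⟨hmI, hmQ, hm⟩ := Finset.mem_filter.1 hmS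
  have hm1 := (Finset.mem_Icc.1 hmI).1
  refine ⟨m, hm1, hQ0, fun b => v.coe_le_nu fun hbQ => ?_, ?_,
    fun b hb => v.coe_lt_nu fun hbQ => ?_⟩
  · rcases Nat.eq_zero_or_pos b with rfl | hb
    · simp
    · linarith [v.vr_sub_mul_eps_le hb hbQ]
  · rw [v.nu_eq_coe_vr hmQ, ← hm, WithTop.coe_inj]
    field_simp
    ring
  · have hle := v.vr_sub_mul_eps_le (hm1.trans hb.le) hbQ
    refine hle.lt_of_ne fun heq => (hlast b ?_).not_gt hb
    refine Finset.mem_filter.2 ⟨Finset.mem_Icc.2 ⟨by omega,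
      le_natDegree_of_hasseDeriv_ne_zero hbQ⟩, hbQ, ?_⟩
    rw [← heq, sub_sub_cancel, mul_div_cancel_left₀ _ (Nat.cast_ne_zero.2 (by omega))]

theorem IsLastSlope.mul {ε : ℝ} {h₁ h₂ : K[X]} {m₁ m₂ : ℕ} (H₁ : v.IsLastSlope ε h₁ m₁)
    (H₂ : v.IsLastSlope ε h₂ m₂) : v.IsLastSlope ε (h₁ * h₂) (m₁ + m₂) := by
  have hsplit : ∀ i j : ℕ, ((v.vr (h₁ * h₂) - ↑(i + j) * ε : ℝ) : WithTop ℝ) =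
      ((v.vr h₁ - i * ε : ℝ) : WithTop ℝ) + ((v.vr h₂ - j * ε : ℝ) : WithTop ℝ) := by
    intro i j
    rw [v.vr_mul H₁.ne_zero H₂.ne_zero, ← WithTop.coe_add]
    exact congrArg _ (by push_cast; ring)
  have hle : ∀ i j : ℕ, ((v.vr (h₁ * h₂) - ↑(i + j) * ε : ℝ) : WithTop ℝ) ≤
      v.ν (hasseDeriv i h₁ * hasseDeriv j h₂) := fun i j => by
    rw [hsplit, v.ν_mul]
    exact add_le_add (H₁.le i) (H₂.le j)
  have hlt : ∀ i j : ℕ, m₁ < i ∨ m₂ < j → ((v.vr (h₁ * h₂) - ↑(i + j) * ε : ℝ) : WithTop ℝ) <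
      v.ν (hasseDeriv i h₁ * hasseDeriv j h₂) := fun i j hij => by
    rw [hsplit, v.ν_mul]
    rcases hij with hi | hj
    · exact WithTop.add_lt_add_of_lt_of_le WithTop.coe_ne_top (H₁.lt i hi) (H₂.le j)
    · exact WithTop.add_lt_add_of_le_of_lt WithTop.coe_ne_top (H₁.le i) (H₂.lt j hj)
  refine ⟨mul_ne_zero H₁.ne_zero H₂.ne_zero, fun b => ?_, ?_, fun b hb => ?_⟩
  · rw [hasseDeriv_mul]
    refine v.toAddValuation.map_le_sum fun p hp => ?_
    rw [← Finset.HasAntidiagonal.mem_antidiagonal.1 hp]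
    exact hle p.1 p.2
  · rw [hasseDeriv_mul, ← v.toAddValuation_apply,
      v.toAddValuation.map_sum_eq_of_lt (j := (m₁, m₂)) (by simp)]
    · rw [toAddValuation_apply, v.ν_mul, H₁.eq, H₂.eq, hsplit]
    · rw [toAddValuation_apply, v.ν_mul, H₁.eq, H₂.eq]
      exact WithTop.add_ne_top.2 ⟨WithTop.coe_ne_top, WithTop.coe_ne_top⟩
    · intro p hp
      obtain ⟨hp, hpm⟩ := Finset.mem_sdiff.1 hp
      have hsum := Finset.HasAntidiagonal.mem_antidiagonal.1 hp
      have hij : m₁ < p.1 ∨ m₂ < p.2 := by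
        by_contra! hle'
        exact hpm (Finset.mem_singleton.2 (Prod.ext (by omega) (by omega)))
      rw [toAddValuation_apply, toAddValuation_apply, v.ν_mul, H₁.eq, H₂.eq, ← hsplit, ← hsum]
      exact hlt p.1 p.2 hij
  · rw [hasseDeriv_mul]
    refine v.toAddValuation.map_lt_sum WithTop.coe_ne_top fun p hp => ?_
    have hsum := Finset.HasAntidiagonal.mem_antidiagonal.1 hp
    rw [← hsum]
    exact hlt p.1 p.2 (by omega)

theorem IsLastSlope.pow {ε : ℝ} {h : K[X]} {m : ℕ} (H : v.IsLastSlope ε h m) (i : ℕ) :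
    v.IsLastSlope ε (h ^ i) (i * m) := by
  induction i with
  | zero => simpa using isLastSlope_zero one_ne_zero (ε := ε) (by simp)
  | succ i ih => simpa [pow_succ, add_mul] using ih.mul H

theorem nu_hasseDeriv_sum_eq {ι : Type*} [LinearOrder ι] {s : Finset ι} {t : ι → K[X]}
    {m : ι → ℕ} (hm : StrictMono m) {ε : ℝ}
    (ht : ∀ i ∈ s, t i ≠ 0 → v.IsLastSlope ε (t i) (m i)) {i₀ : ι} (hi₀ : i₀ ∈ s)
    (hti₀ : t i₀ ≠ 0) (hmin : ∀ i ∈ s, v.ν (t i₀) ≤ v.ν (t i))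
    (hlast : ∀ i ∈ s, i₀ < i → v.ν (t i₀) < v.ν (t i)) :
    v.ν (hasseDeriv (m i₀) (∑ i ∈ s, t i)) = ((v.vr (t i₀) - m i₀ * ε : ℝ) : WithTop ℝ) := by
  classical
  have H₀ := ht i₀ hi₀ hti₀
  rw [map_sum, ← v.toAddValuation_apply, v.toAddValuation.map_sum_eq_of_lt hi₀] <;>
    simp only [toAddValuation_apply, H₀.eq]
  · exact WithTop.coe_ne_top
  intro i hi
  obtain ⟨hi, hii₀⟩ := Finset.mem_sdiff.1 hi
  rcases eq_or_ne (t i) 0 with hti | hti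
  · rw [hti, map_zero, nu_zero]
    exact WithTop.coe_lt_top _
  have H := ht i hi hti
  have hvr := (v.nu_le_nu_iff hti₀ hti).1 (hmin i hi)
  rcases lt_or_gt_of_ne (Finset.notMem_singleton.1 hii₀) with hlt | hgt
  · refine lt_of_le_of_lt ?_ (H.lt _ (hm hlt))
    exact WithTop.coe_le_coe.2 (by linarith)
  · refine lt_of_lt_of_le ?_ (H.le _)
    have := (v.nu_le_nu_iff hti hti₀).not.1 (hlast i hi hgt).not_ge
    exact WithTop.coe_lt_coe.2 (by linarith)

variable {Q : K[X]}

theorem nuQ_le_nu (hQ : Q.Monic) (hQd : 0 < Q.natDegree) (g : K[X]) : v.nuQ Q g ≤ v.ν g := by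
  conv_rhs => rw [← sum_qCoeff_mul_pow hQ hQd g]
  exact v.toAddValuation.map_le_sum fun i hi => Finset.inf_le hi

theorem IsKeyPol.eps_lt {a : K[X]} (hQ : v.IsKeyPol Q) (hadeg : a.natDegree < Q.natDegree)
    (ha : 0 < a.natDegree) : v.eps a < v.eps Q :=
  not_le.1 fun hle => (hQ.2.2 a ha hle).not_gt hadeg

theorem IsKeyPol.isLastSlope_qCoeff_mul_pow (hQ : v.IsKeyPol Q) {m : ℕ}
    (hm : v.IsLastSlope (v.eps Q) Q m) {f : K[X]} {i : ℕ} (hfi : qCoeff Q f i ≠ 0) :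
    v.IsLastSlope (v.eps Q) (qCoeff Q f i * Q ^ i) (i * m) := by
  have hdeg := natDegree_lt_natDegree hfi (degree_qCoeff_lt hQ.1 f i)
  simpa using (isLastSlope_zero hfi (hQ.eps_lt hdeg)).mul (hm.pow i)

theorem IsKeyPol.exists_nu_hasseDeriv_eq (hQ : v.IsKeyPol Q) {g : K[X]} (hg : g ≠ 0)
    (hQg : Q ∣ g) : ∃ b : ℕ, 0 < b ∧ ∃ μ : ℝ,
      v.nuQ Q g = μ ∧ v.ν (hasseDeriv b g) = ((μ - b * v.eps Q : ℝ) : WithTop ℝ) := by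
  have hQm := hQ.1
  have hQd := hQ.2.1
  obtain ⟨m, hm0, hm⟩ := v.exists_isLastSlope_eps hQd
  set t := fun i => qCoeff Q g i * Q ^ i
  set s := Finset.range (g.natDegree / Q.natDegree + 1)
  obtain ⟨i₀, hi₀, hi₀min, hi₀last⟩ :=
    Finset.exists_last_mem_eq_inf (s := s) (by simp [s]) fun i => v.ν (t i)
  have hti₀ : t i₀ ≠ 0 := by
    intro h0
    have : v.ν (t i₀) ≤ v.ν g := hi₀min.trans_le (nuQ_le_nu hQm hQd g)
    rw [h0, nu_zero, top_le_iff, v.ν_eq_top_iff] at this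
    exact hg this
  have hi₀pos : 0 < i₀ := Nat.pos_of_ne_zero fun h0 => hti₀ <| by
    subst h0
    simp [t, qCoeff_zero_of_dvd hQm hQg]
  have hμ : v.nuQ Q g = v.vr (t i₀) := by rw [nuQ, ← hi₀min, v.nu_eq_coe_vr hti₀]
  refine ⟨i₀ * m, Nat.mul_pos hi₀pos hm0, v.vr (t i₀), hμ, ?_⟩
  have hsum : ∑ i ∈ s, t i = g := sum_qCoeff_mul_pow hQm hQd g
  have := nu_hasseDeriv_sum_eq (s := s) (t := t) (m := (· * m)) (ε := v.eps Q)
    (fun i j hij => Nat.mul_lt_mul_of_pos_right hij hm0)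
    (fun i _ hti => hQ.isLastSlope_qCoeff_mul_pow hm (left_ne_zero_of_mul hti)) hi₀ hti₀
    (fun i hi => hi₀min.trans_le (Finset.inf_le hi))
    (fun i hi h => hi₀min.trans_lt (hi₀last i hi h))
  rwa [hsum] at this

end PolyVal

theorem stmt_1_general (v : PolyVal K) (n : ℕ)
    (Q : Polynomial K) (hQ : Q ∈ v.Psi n)
    (f q r : Polynomial K) (hfqr : f = q * Q + r) (hq : q ≠ 0)
    (γ : ℝ) (hfγ : v.eps f ≤ γ) (hγQ : γ < v.eps Q)
    (hrγ : 0 < r.natDegree → v.eps r ≤ γ) :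
    v.ν f = v.ν r ∧ v.ν f + ((v.eps Q - γ : ℝ) : WithTop ℝ) ≤ v.nuQ Q (q * Q) := by
  obtain ⟨hQ, -⟩ := hQ
  have hg : q * Q = f - r := by rw [hfqr]; ring
  obtain ⟨b, hb, μ, hμ, hgb⟩ := hQ.exists_nu_hasseDeriv_eq (mul_ne_zero hq hQ.1.ne_zero)
    (dvd_mul_left Q q)
  have hmin : min (v.ν f) (v.ν r) ≤ ((μ - (v.eps Q - γ) : ℝ) : WithTop ℝ) := by
    refine (v.min_nu_le_nu_hasseDeriv_sub_add (fun _ => hfγ) hrγ hb).trans ?_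
    rw [← hg, hgb, ← WithTop.coe_add, WithTop.coe_le_coe]
    nlinarith [(Nat.one_le_cast (α := ℝ)).2 hb]
  have hfr : v.ν f = v.ν r := by
    refine v.toAddValuation.map_eq_of_min_lt_map_sub ?_
    calc min (v.ν f) (v.ν r) ≤ ((μ - (v.eps Q - γ) : ℝ) : WithTop ℝ) := hmin
      _ < v.nuQ Q (q * Q) := hμ ▸ WithTop.coe_lt_coe.2 (by linarith)
      _ ≤ v.ν (f - r) := hg ▸ PolyVal.nuQ_le_nu hQ.1 hQ.2.1 _
  refine ⟨hfr, ?_⟩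
  rw [← hfr, min_self] at hmin
  calc v.ν f + ((v.eps Q - γ : ℝ) : WithTop ℝ)
      ≤ ((μ - (v.eps Q - γ) : ℝ) : WithTop ℝ) + ((v.eps Q - γ : ℝ) : WithTop ℝ) :=
        add_le_add hmin le_rfl
    _ = v.nuQ Q (q * Q) := by rw [hμ, ← WithTop.coe_add, sub_add_cancel]

/-- Lemma `keypolmelhorado`: if `Q` is a key polynomial, `f = qQ + r` with
`ε(f) ≤ γ < ε(Q)` (and `ε(r) ≤ γ` if `r` is nonconstant), then `ν(f) = ν(r)` and
`ν_Q(qQ) − (ε(Q) − γ) ≥ ν(f)`. -/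
theorem stmt_1 (v : PolyVal K) (n : ℕ) (hn : 0 < n)
    (Q : Polynomial K) (hQ : Q ∈ v.Psi n)
    (f q r : Polynomial K) (hfqr : f = q * Q + r) (hq : q ≠ 0)
    (hf : 0 < f.natDegree)
    (γ : ℝ) (hfγ : v.eps f ≤ γ) (hγQ : γ < v.eps Q)
    (hrγ : 0 < r.natDegree → v.eps r ≤ γ) :
    v.ν f = v.ν r ∧ v.ν f + ((v.eps Q - γ : ℝ) : WithTop ℝ) ≤ v.nuQ Q (q * Q) :=
  stmt_1_general v n Q hQ f q r hfqr hq γ hfγ hγQ hrγ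
end
end
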